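/- Let n ≥ 8 be an integer and Φ = 2·cos(π/n). Then for all integers p, k with p ≥ 2 and k ≥ 1, one has (p·(k+1) − 1)·(Φ³ − 2Φ) < (p−1)·k·(Φ³ − Φ) + (p·(k+1) − 1)·Φ; equivalently, (p(k+1)−1)/((p−1)·k·(Φ³−Φ) + (p(k+1)−1)·Φ) < 1/(Φ³ − 2Φ). -/
import Mathlib


/-- `Φ = 2 cos(π/n)`. -/
noncomputable def Phi (n : ℕ) : ℝ := 2 * Real.cos (Real.pi / n)

theorem stmt8 (n : ℕ) (hn : 8 ≤ n) (p k : ℕ) (hp : 2 ≤ p) (hk : 1 ≤ k) :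
    ((p : ℝ) * (k + 1) - 1) * (Phi n ^ 3 - 2 * Phi n) <
      ((p : ℝ) - 1) * k * (Phi n ^ 3 - Phi n) + ((p : ℝ) * (k + 1) - 1) * Phi n := by
  have hn0 : (0:ℝ) < n := by positivity
  have hpi := Real.pi_pos
  have harg0 : 0 < Real.pi / n := by positivity
  have harg2 : Real.pi / n < Real.pi / 2 := by
    apply div_lt_div_of_pos_left hpi (by norm_num) ?_
    exact_mod_cast by omega
  have hx0 : 0 < Phi n := by
    have := Real.cos_pos_of_mem_Ioo ⟨by linarith, harg2⟩
    unfold Phi; linarith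
  have hx2 : Phi n < 2 := by
    have h1 : Real.cos (Real.pi / n) < Real.cos 0 :=
      Real.cos_lt_cos_of_nonneg_of_le_pi le_rfl (by linarith) harg0
    rw [Real.cos_zero] at h1
    unfold Phi; linarith
  have hp' : (2:ℝ) ≤ p := by exact_mod_cast hp
  have hk' : (1:ℝ) ≤ k := by exact_mod_cast hk
  set x := Phi n
  have hA : 0 < x * (2 - x) * (2 + x) :=
    mul_pos (mul_pos hx0 (by linarith)) (by linarith)
  have hpk : (0:ℝ) ≤ ((p:ℝ)-1)*k := mul_nonneg (by linarith) (by linarith)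
  have hpk2 : (0:ℝ) ≤ (p:ℝ)*(k+1)-1 :=
    by nlinarith
  nlinarith [mul_nonneg (mul_nonneg (sub_nonneg.2 hp') (sub_nonneg.2 hk')) hx0.le,
    mul_le_mul_of_nonneg_left hA.le hpk,
    mul_pos (mul_pos hx0 (sub_pos.2 hx2)) (by linarith : (0:ℝ) < 2 + x),
    mul_le_mul_of_nonneg_left hA.le hpk2,
    mul_pos hx0 (sub_pos.2 hx2)]
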